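/- For every integer d ≥ 1 and every x ∈ ℝ^d, if prog_1(x) < d then ‖∇H_d(x)‖ ≥ 1, where ‖·‖ is the Euclidean norm. -/

import Mathlib

/-- `Ψ(t) = 0` for `t ≤ 1/2` and `Ψ(t) = exp(1 − 1/(2t−1)²)` for `t > 1/2`. -/
noncomputable def Psi (t : ℝ) : ℝ :=
  if t ≤ 1 / 2 then 0 else Real.exp (1 - 1 / (2 * t - 1) ^ 2)

/-- `Φ(t) = √e ∫_{−∞}^{t} exp(−τ²/2) dτ`. -/
noncomputable def Phi (t : ℝ) : ℝ :=
  Real.sqrt (Real.exp 1) * ∫ τ in Set.Iic t, Real.exp (-τ ^ 2 / 2)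

/-- The `i`-th coordinate (1-based, `1 ≤ i ≤ d`) of a vector in `ℝ^d`;
zero when out of range. -/
noncomputable def coord (d : ℕ) (y : EuclideanSpace ℝ (Fin d)) (i : ℕ) : ℝ :=
  if h : i - 1 < d then y ⟨i - 1, h⟩ else 0

/-- The chain function
`H_d(x) = −Ψ(1)Φ(x₁) + ∑_{i=2}^d (Ψ(−x_{i−1})Φ(−x_i) − Ψ(x_{i−1})Φ(x_i))`. -/
noncomputable def Hchain (d : ℕ) (y : EuclideanSpace ℝ (Fin d)) : ℝ :=
  -Psi 1 * Phi (coord d y 1) +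
    ∑ i ∈ Finset.Icc 2 d,
      (Psi (-coord d y (i - 1)) * Phi (-coord d y i) -
        Psi (coord d y (i - 1)) * Phi (coord d y i))

open Classical in
/-- The progress index `prog_a(x) = max({i ∈ {1,…,d} : |x_i| > a} ∪ {0})`. -/
noncomputable def prog (d : ℕ) (a : ℝ) (y : EuclideanSpace ℝ (Fin d)) : ℕ :=
  ((Finset.Icc 1 d).filter fun i => a < |coord d y i|).sup id

/-! With the convention `x₀ = 1`, `H_d(x) = ∑_{i=1}^d ℓ(x_{i−1}, x_i)` where
`ℓ(a, b) = Ψ(−a)Φ(−b) − Ψ(a)Φ(b)`. As `Ψ` and `Φ` are nonnegative and nondecreasing, `ℓ` is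
nonincreasing in each argument, so every summand is nonincreasing along a coordinate direction.
For `j = prog_1(x) < d` we have `|x_j| ≥ 1` and `|x_{j+1}| ≤ 1`, and along `e_{j+1}` the summand
`ℓ(x_j, x_{j+1})` has slope `−Ψ(−x_j)Φ'(−x_{j+1}) − Ψ(x_j)Φ'(x_{j+1}) ≤ −1`: one of `Ψ(±x_j)` is
at least `1`, and `Φ' ≥ √e · e^{−1/2} = 1` on `[−1, 1]`. Hence `∂_{j+1} H_d(x) ≤ −1`, and
`‖∇H_d(x)‖ ≥ |⟨∇H_d(x), e_{j+1}⟩| ≥ 1`. -/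

open Filter Topology Asymptotics MeasureTheory

lemma Psi_nonneg (t : ℝ) : 0 ≤ Psi t := by
  unfold Psi; split <;> positivity

lemma Psi_monotone : Monotone Psi := by
  intro s t hst
  by_cases hs : s ≤ 1 / 2
  · simp only [Psi, if_pos hs]
    exact Psi_nonneg t
  · have ht : ¬t ≤ 1 / 2 := by linarith
    have hs' : 0 < 2 * s - 1 := by linarith
    simp only [Psi, if_neg hs, if_neg ht, Real.exp_le_exp, sub_le_sub_iff_left]
    gcongr

lemma one_le_Psi {t : ℝ} (ht : 1 ≤ t) : 1 ≤ Psi t := by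
  have h : (1 : ℝ) ≤ (2 * t - 1) ^ 2 := one_le_pow₀ (by linarith)
  rw [Psi, if_neg (by linarith), Real.one_le_exp_iff, sub_nonneg]
  exact div_le_one_of_le₀ h (by positivity)

lemma Psi_le_sq (t : ℝ) : Psi t ≤ Real.exp 1 * (2 * t - 1) ^ 2 := by
  unfold Psi
  split_ifs with ht
  · positivity
  · have hu : 0 < (2 * t - 1) ^ 2 := by
      have : 0 < 2 * t - 1 := by linarith
      positivity
    -- `exp (-1/u) ≤ u` because `exp (1/u) ≥ 1/u`
    have key : Real.exp (-(1 / (2 * t - 1) ^ 2)) ≤ (2 * t - 1) ^ 2 := by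
      rw [Real.exp_neg, inv_le_comm₀ (Real.exp_pos _) hu, ← one_div]
      linarith [Real.add_one_le_exp (1 / (2 * t - 1) ^ 2)]
    rw [sub_eq_add_neg, Real.exp_add]
    gcongr

lemma hasDerivAt_Psi_half : HasDerivAt Psi 0 (1 / 2) := by
  have hzero : Psi (1 / 2) = 0 := if_pos le_rfl
  rw [hasDerivAt_iff_isLittleO]
  simp only [hzero, sub_zero, smul_zero]
  refine IsBigO.trans_isLittleO ?_ (isLittleO_pow_sub_sub (1 / 2 : ℝ) one_lt_two)
  refine IsBigO.of_bound (4 * Real.exp 1) (Eventually.of_forall fun t => ?_)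
  simp only [Real.norm_eq_abs, abs_pow, sq_abs, abs_of_nonneg (Psi_nonneg t)]
  calc Psi t ≤ Real.exp 1 * (2 * t - 1) ^ 2 := Psi_le_sq t
    _ = 4 * Real.exp 1 * (t - 1 / 2) ^ 2 := by ring

lemma differentiable_Psi : Differentiable ℝ Psi := by
  intro t
  rcases lt_trichotomy t (1 / 2) with ht | rfl | ht
  · have hev : (fun _ => (0 : ℝ)) =ᶠ[𝓝 t] Psi := by
      filter_upwards [Iio_mem_nhds ht] with s hs
      exact (if_pos (le_of_lt hs)).symm
    exact (differentiableAt_const 0).congr_of_eventuallyEq hev.symm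
  · exact hasDerivAt_Psi_half.differentiableAt
  · have hev : (fun s => Real.exp (1 - 1 / (2 * s - 1) ^ 2)) =ᶠ[𝓝 t] Psi := by
      filter_upwards [Ioi_mem_nhds ht] with s hs
      exact (if_neg (not_le.mpr hs)).symm
    have hne : (2 * t - 1) ^ 2 ≠ 0 := by
      have : 2 * t - 1 ≠ 0 := by linarith
      positivity
    refine DifferentiableAt.congr_of_eventuallyEq ?_ hev.symm
    fun_prop (disch := exact hne)

lemma hasDerivAt_integral_Iic {E : Type*} [NormedAddCommGroup E] [NormedSpace ℝ E]
    [CompleteSpace E] {f : ℝ → E} (hf : Integrable f) (hc : Continuous f)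
    (t : ℝ) : HasDerivAt (fun s => ∫ τ in Set.Iic s, f τ) (f t) t := by
  have hsplit : (fun s => ∫ τ in Set.Iic s, f τ) =
      fun s => (∫ τ in Set.Iic 0, f τ) + ∫ τ in (0 : ℝ)..s, f τ := by
    funext s
    rw [← intervalIntegral.integral_Iic_sub_Iic hf.integrableOn hf.integrableOn,
      add_sub_cancel]
  rw [hsplit]
  exact (intervalIntegral.integral_hasDerivAt_right hf.intervalIntegrable
    hc.aestronglyMeasurable.stronglyMeasurableAtFilter hc.continuousAt).const_add _

lemma hasDerivAt_Phi (t : ℝ) :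
    HasDerivAt Phi (Real.sqrt (Real.exp 1) * Real.exp (-t ^ 2 / 2)) t := by
  have hint : Integrable fun τ : ℝ => Real.exp (-τ ^ 2 / 2) := by
    simpa [div_eq_inv_mul] using integrable_exp_neg_mul_sq (by norm_num : (0 : ℝ) < 1 / 2)
  exact (hasDerivAt_integral_Iic hint (by fun_prop) t).const_mul _

lemma differentiable_Phi : Differentiable ℝ Phi := fun t => (hasDerivAt_Phi t).differentiableAt

lemma Phi_monotone : Monotone Phi :=
  monotone_of_deriv_nonneg differentiable_Phi fun t => by
    rw [(hasDerivAt_Phi t).deriv]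
    positivity

lemma Phi_nonneg (t : ℝ) : 0 ≤ Phi t :=
  mul_nonneg (Real.sqrt_nonneg _)
    (setIntegral_nonneg measurableSet_Iic fun _ _ => (Real.exp_pos _).le)

lemma one_le_deriv_Phi {t : ℝ} (ht : |t| ≤ 1) : 1 ≤ deriv Phi t := by
  have hsqrt : Real.sqrt (Real.exp 1) = Real.exp (1 / 2) := by
    rw [Real.sqrt_eq_iff_mul_self_eq_of_pos (Real.exp_pos _), ← Real.exp_add]
    norm_num
  have ht2 : t ^ 2 ≤ 1 := by
    rw [← sq_abs]
    nlinarith [abs_nonneg t]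
  rw [(hasDerivAt_Phi t).deriv, hsqrt, ← Real.exp_add, Real.one_le_exp_iff]
  linarith

attribute [fun_prop] differentiable_Psi differentiable_Phi

noncomputable def chainLink (a b : ℝ) : ℝ := Psi (-a) * Phi (-b) - Psi a * Phi b

lemma chainLink_anti {a a' b b' : ℝ} (ha : a ≤ a') (hb : b ≤ b') :
    chainLink a' b' ≤ chainLink a b := by
  have hneg : Psi (-a') * Phi (-b') ≤ Psi (-a) * Phi (-b) :=
    mul_le_mul (Psi_monotone (neg_le_neg ha)) (Phi_monotone (neg_le_neg hb)) (Phi_nonneg _)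
      (Psi_nonneg _)
  have hpos : Psi a * Phi b ≤ Psi a' * Phi b' :=
    mul_le_mul (Psi_monotone ha) (Phi_monotone hb) (Phi_nonneg _) (Psi_nonneg _)
  unfold chainLink
  linarith

lemma hasDerivAt_chainLink_snd (a b : ℝ) :
    HasDerivAt (chainLink a) (-(Psi (-a) * deriv Phi (-b) + Psi a * deriv Phi b)) b := by
  have hneg : HasDerivAt (fun t => Phi (-t)) (-deriv Phi (-b)) b := by
    have h := (differentiable_Phi (-b)).hasDerivAt.comp b (hasDerivAt_neg b)
    rwa [mul_neg_one] at h
  exact ((hneg.const_mul (Psi (-a))).sub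
    ((differentiable_Phi b).hasDerivAt.const_mul (Psi a))).congr_deriv (by ring)

lemma deriv_chainLink_snd_le {a b : ℝ} (ha : 1 ≤ |a|) (hb : |b| ≤ 1) :
    deriv (chainLink a) b ≤ -1 := by
  have hΦ : 1 ≤ deriv Phi b := one_le_deriv_Phi hb
  have hΦneg : 1 ≤ deriv Phi (-b) := one_le_deriv_Phi (by rwa [abs_neg])
  rw [(hasDerivAt_chainLink_snd a b).deriv]
  rcases le_abs'.mp ha with ha | ha
  · have : 1 ≤ Psi (-a) := one_le_Psi (by linarith)
    nlinarith [Psi_nonneg a]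
  · have : 1 ≤ Psi a := one_le_Psi ha
    nlinarith [Psi_nonneg (-a)]

noncomputable def extCoord (d : ℕ) (y : EuclideanSpace ℝ (Fin d)) (i : ℕ) : ℝ :=
  if i = 0 then 1 else coord d y i

@[fun_prop]
lemma differentiable_coord (d i : ℕ) :
    Differentiable ℝ fun y : EuclideanSpace ℝ (Fin d) => coord d y i := by
  unfold coord
  split_ifs with h
  · exact (EuclideanSpace.proj (⟨i - 1, h⟩ : Fin d) :
      EuclideanSpace ℝ (Fin d) →L[ℝ] ℝ).differentiable
  · exact differentiable_const 0

lemma differentiable_Hchain (d : ℕ) : Differentiable ℝ (Hchain d) := by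
  unfold Hchain
  fun_prop

lemma Hchain_eq_sum_chainLink {d : ℕ} (hd : 1 ≤ d) (y : EuclideanSpace ℝ (Fin d)) :
    Hchain d y = ∑ i ∈ Finset.Icc 1 d, chainLink (extCoord d y (i - 1)) (extCoord d y i) := by
  have hPsi : Psi (-1) = 0 := if_pos (by norm_num)
  rw [← Finset.insert_Icc_add_one_left_eq_Icc hd, Finset.sum_insert (by simp), Hchain]
  congr 1
  · simp [chainLink, extCoord, hPsi]
  · refine Finset.sum_congr rfl fun i hi => ?_
    have hi2 : 2 ≤ i := (Finset.mem_Icc.mp hi).1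
    simp only [chainLink, extCoord, if_neg (show i - 1 ≠ 0 by omega), if_neg (show i ≠ 0 by omega)]

lemma extCoord_add_smul_single {d : ℕ} (x : EuclideanSpace ℝ (Fin d)) (k : Fin d) (s : ℝ)
    (i : ℕ) :
    extCoord d (x + s • EuclideanSpace.single k 1) i =
      extCoord d x i + s * if i = k + 1 then 1 else 0 := by
  rcases Nat.eq_zero_or_pos i with rfl | hi
  · simp [extCoord]
  · simp only [extCoord, coord, if_neg hi.ne']
    by_cases h : i - 1 < d
    · have hik : (⟨i - 1, h⟩ : Fin d) = k ↔ i = k + 1 := by rw [Fin.ext_iff, Fin.val_mk]; omega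
      simp [h, hik]
    · have hik : i ≠ k + 1 := by omega
      simp [h, hik]

lemma deriv_sum_le_deriv_of_antitone {ι : Type*} {s : Finset ι} {f : ι → ℝ → ℝ} {x : ℝ}
    {i₀ : ι} (hi₀ : i₀ ∈ s) (hdiff : ∀ i ∈ s, DifferentiableAt ℝ (f i) x)
    (hanti : ∀ i ∈ s, Antitone (f i)) :
    deriv (fun t => ∑ i ∈ s, f i t) x ≤ deriv (f i₀) x := by
  classical
  rw [deriv_fun_sum hdiff, ← Finset.add_sum_erase s _ hi₀, add_le_iff_nonpos_right]
  exact Finset.sum_nonpos fun i hi => (hanti i (Finset.mem_of_mem_erase hi)).deriv_nonpos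

lemma abs_deriv_line_le_norm_gradient {E : Type*} [NormedAddCommGroup E]
    [InnerProductSpace ℝ E] [CompleteSpace E] {f : E → ℝ} {x : E}
    (hf : DifferentiableAt ℝ f x) (v : E) :
    |deriv (fun s : ℝ => f (x + s • v)) 0| ≤ ‖gradient f x‖ * ‖v‖ := by
  have hline : HasDerivAt (fun s : ℝ => x + s • v) v 0 := by
    simpa using ((hasDerivAt_id (0 : ℝ)).smul_const v).const_add x
  have hf' : HasFDerivAt f (fderiv ℝ f x) (x + (0 : ℝ) • v) := by
    simpa using hf.hasFDerivAt
  have hderiv : deriv (fun s : ℝ => f (x + s • v)) 0 = fderiv ℝ f x v :=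
    (hf'.comp_hasDerivAt 0 hline).deriv
  rw [hderiv, ← inner_gradient_left]
  exact abs_real_inner_le_norm _ _

lemma deriv_Hchain_line_le {d : ℕ} (x : EuclideanSpace ℝ (Fin d)) (k : Fin d)
    (hk : 1 ≤ |extCoord d x k|) (hk1 : |extCoord d x (k + 1)| ≤ 1) :
    deriv (fun s : ℝ => Hchain d (x + s • EuclideanSpace.single k 1)) 0 ≤ -1 := by
  let δ (i : ℕ) : ℝ := if i = k + 1 then 1 else 0
  let F (i : ℕ) (s : ℝ) : ℝ :=
    chainLink (extCoord d x (i - 1) + s * δ (i - 1)) (extCoord d x i + s * δ i)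
  simp_rw [Hchain_eq_sum_chainLink k.pos, extCoord_add_smul_single]
  calc deriv (fun s => ∑ i ∈ Finset.Icc 1 d, F i s) 0 ≤ deriv (F (k + 1)) 0 := by
        refine deriv_sum_le_deriv_of_antitone (by simp) (fun i _ => ?_) fun i _ => ?_
        · unfold F chainLink
          fun_prop
        · have hδ (i : ℕ) : 0 ≤ δ i := by unfold δ; split_ifs <;> norm_num
          intro s t hst
          exact chainLink_anti (by gcongr) (by gcongr)
    _ = deriv (fun s => chainLink (extCoord d x k) (extCoord d x (k + 1) + s)) 0 := by
        simp [F, δ]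
    _ = deriv (chainLink (extCoord d x k)) (extCoord d x (k + 1)) := by
        rw [deriv_comp_const_add, add_zero]
    _ ≤ -1 := deriv_chainLink_snd_le hk hk1

lemma abs_coord_le_of_prog_lt {d : ℕ} {a : ℝ} {y : EuclideanSpace ℝ (Fin d)} {i : ℕ}
    (hi : prog d a y < i) (hid : i ≤ d) : |coord d y i| ≤ a := by
  by_contra! h
  have hmem : i ∈ (Finset.Icc 1 d).filter fun i => a < |coord d y i| :=
    Finset.mem_filter.mpr ⟨Finset.mem_Icc.mpr ⟨by omega, hid⟩, h⟩
  exact absurd (Finset.le_sup (f := id) hmem) (not_le.mpr hi)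

lemma lt_abs_coord_prog {d : ℕ} {a : ℝ} {y : EuclideanSpace ℝ (Fin d)} (h : prog d a y ≠ 0) :
    a < |coord d y (prog d a y)| := by
  classical
  have hne : ((Finset.Icc 1 d).filter fun i => a < |coord d y i|).Nonempty := by
    by_contra hempty
    exact h (by rw [prog, Finset.not_nonempty_iff_eq_empty.mp hempty, Finset.sup_empty]; rfl)
  obtain ⟨i, hi, hsup⟩ := Finset.exists_mem_eq_sup _ hne id
  have hprog : prog d a y = i := by rw [prog, hsup]; rfl
  rw [hprog]
  exact (Finset.mem_filter.mp hi).2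

theorem chain_gradient_lower_bound_general (d : ℕ)
    (x : EuclideanSpace ℝ (Fin d)) (hx : prog d 1 x < d) :
    1 ≤ ‖gradient (Hchain d) x‖ := by
  set j := prog d 1 x
  have hj : 1 ≤ |extCoord d x j| := by
    rcases eq_or_ne j 0 with h | h
    · simp [extCoord, h]
    · rw [extCoord, if_neg h]
      exact (lt_abs_coord_prog h).le
  have hj1 : |extCoord d x (j + 1)| ≤ 1 := by
    rw [extCoord, if_neg j.succ_ne_zero]
    exact abs_coord_le_of_prog_lt j.lt_succ_self hx
  set e := EuclideanSpace.single (⟨j, hx⟩ : Fin d) (1 : ℝ)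
  have hderiv : deriv (fun s : ℝ => Hchain d (x + s • e)) 0 ≤ -1 :=
    deriv_Hchain_line_le x ⟨j, hx⟩ hj hj1
  have hgrad := abs_deriv_line_le_norm_gradient (differentiable_Hchain d x) e
  rw [PiLp.norm_single, norm_one, mul_one] at hgrad
  linarith [neg_le_abs (deriv (fun s : ℝ => Hchain d (x + s • e)) 0)]

/-- Large-gradient property: if `prog_1(x) < d` then `‖∇H_d(x)‖ ≥ 1`. -/
theorem chain_gradient_lower_bound (d : ℕ) (hd : 1 ≤ d)
    (x : EuclideanSpace ℝ (Fin d)) (hx : prog d 1 x < d) :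
    1 ≤ ‖gradient (Hchain d) x‖ :=
  chain_gradient_lower_bound_general d x hx
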